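/- For the TSP⨟ specification X = 1 + a.(Y⨟X), Y = 1 + b.1 + a.(Y⨟Y), the process graph of X is bisimilar to the always-accepting counter: the state Y^n⨟X (for n ≥ 1) has exactly the transitions Y^n⨟X →a Y^{n+1}⨟X and Y^n⨟X →b Y^{n-1}⨟X, X →a Y⨟X, and all states are accepting. -/
import Mathlib


structure LTS (S : Type*) (A : Type*) where
  Tr : S → A → S → Prop
  Acc : S → Prop

def IsBisimulation {S A : Type*} (L : LTS S A) (R : S → S → Prop) : Prop :=
  Symmetric R ∧ ∀ s t, R s t →
    (∀ a s', L.Tr s a s' → ∃ t', L.Tr t a t' ∧ R s' t') ∧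
    (L.Acc s → L.Acc t)

def Bisimilar {S A : Type*} (L : LTS S A) (s t : S) : Prop :=
  ∃ R, IsBisimulation L R ∧ R s t

/-- TSP process expressions: 0, 1, action prefix, choice, sequential
composition, and identifiers from `V`. -/
inductive Expr (A V : Type) where
  | zero | one
  | act (a : A) (p : Expr A V)
  | add (p q : Expr A V)
  | seq (p q : Expr A V)
  | var (X : V)

/-- The acceptance predicate ↓ for TSP, relative to a specification Δ. -/
inductive EAcc {A V : Type} (Δ : V → Expr A V) : Expr A V → Prop
  | one : EAcc Δ .one
  | addL {p q} : EAcc Δ p → EAcc Δ (Expr.add p q)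
  | addR {p q} : EAcc Δ q → EAcc Δ (Expr.add p q)
  | seq {p q} : EAcc Δ p → EAcc Δ q → EAcc Δ (Expr.seq p q)
  | var {X} : EAcc Δ (Δ X) → EAcc Δ (.var X)

/-- Characterization of the TSP⨟ transition relation (sequencing ⨟ instead of
sequential composition): `T` agrees with the operational rules, where the rule
for the second argument of ⨟ has the negative premise that the first argument
has no outgoing transitions. -/
def IsSeqStep {A V : Type} (Δ : V → Expr A V)
    (T : Expr A V → A → Expr A V → Prop) : Prop :=
  ∀ p a q, T p a q ↔
    match p with
    | .zero => False
    | .one => False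
    | .act b r => a = b ∧ q = r
    | .add r s => T r a q ∨ T s a q
    | .seq r s => (∃ r', T r a r' ∧ q = Expr.seq r' s) ∨
        (EAcc Δ r ∧ (∀ b r', ¬ T r b r') ∧ T s a q)
    | .var X => T (Δ X) a q
/-- A bisimulation between the states of two labelled transition systems. -/
def IsBisimulation2 {S T A : Type*} (L : LTS S A) (L' : LTS T A)
    (R : S → T → Prop) : Prop :=
  ∀ s t, R s t →
    (∀ a s', L.Tr s a s' → ∃ t', L'.Tr t a t' ∧ R s' t') ∧
    (∀ a t', L'.Tr t a t' → ∃ s', L.Tr s a s' ∧ R s' t') ∧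
    (L.Acc s ↔ L'.Acc t)

def Bisimilar2 {S T A : Type*} (L : LTS S A) (L' : LTS T A) (s : S) (t : T) : Prop :=
  ∃ R, IsBisimulation2 L L' R ∧ R s t
inductive Lab where
  | a | b

inductive Id2 where
  | X | Y

def counter : LTS ℕ Lab :=
  { Tr := fun m l n => (l = .a ∧ n = m + 1) ∨ (l = .b ∧ m = n + 1)
    Acc := fun _ => True }

/-- The TSP⨟ specification `X = 1 + a.(Y⨟X)`, `Y = 1 + b.1 + a.(Y⨟Y)`. -/
def Δ10 : Id2 → Expr Lab Id2
  | .X => (Expr.one).add (.act .a (Expr.seq (.var .Y) (.var .X)))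
  | .Y => ((Expr.one).add (.act .b .one)).add (.act .a (Expr.seq (.var .Y) (.var .Y)))

/-- `Y^n ⨟ X` -/
def ynx : ℕ → Expr Lab Id2
  | 0 => .var .X
  | n + 1 => Expr.seq (.var .Y) (ynx n)

/-- Count of `Y`s in a stack of `1`s and `Y`s (none if not such a stack). -/
def cntY : Expr Lab Id2 → Option ℕ
  | .one => some 0
  | .var .Y => some 1
  | .seq p q =>
      match cntY p, cntY q with
      | some m, some n => some (m + n)
      | _, _ => none
  | _ => none

/-- Count of `Y`s in `p₁ ⨟ ⋯ ⨟ pₖ ⨟ X` where each `pᵢ` is a stack of `1`s/`Y`s. -/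
def cnt : Expr Lab Id2 → Option ℕ
  | .var .X => some 0
  | .seq p e =>
      match cntY p, cnt e with
      | some m, some n => some (m + n)
      | _, _ => none
  | _ => none

lemma cntY_seq {p q : Expr Lab Id2} {k : ℕ} (h : cntY (.seq p q) = some k) :
    ∃ m n, cntY p = some m ∧ cntY q = some n ∧ k = m + n := by
  rcases hp : cntY p with _ | m <;> rcases hq : cntY q with _ | n <;>
    simp [cntY, hp, hq] at h
  exact ⟨m, n, rfl, rfl, h.symm⟩

lemma cnt_seq {p q : Expr Lab Id2} {k : ℕ} (h : cnt (.seq p q) = some k) :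
    ∃ m n, cntY p = some m ∧ cnt q = some n ∧ k = m + n := by
  rcases hp : cntY p with _ | m <;> rcases hq : cnt q with _ | n <;>
    simp [cnt, hp, hq] at h
  exact ⟨m, n, rfl, rfl, h.symm⟩

lemma accY : ∀ p : Expr Lab Id2, ∀ k, cntY p = some k → EAcc Δ10 p := by
  intro p
  induction p with
  | zero => intro k hk; simp [cntY] at hk
  | one => intro _ _; exact .one
  | act a r _ => intro k hk; simp [cntY] at hk
  | add p q _ _ => intro k hk; simp [cntY] at hk
  | seq r s ihr ihs =>
      intro k hk
      obtain ⟨m, n, hm, hn, -⟩ := cntY_seq hk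
      exact .seq (ihr m hm) (ihs n hn)
  | var v =>
      cases v with
      | X => intro k hk; simp [cntY] at hk
      | Y => intro _ _; exact .var (.addL (.addL .one))

lemma accE : ∀ e : Expr Lab Id2, ∀ n, cnt e = some n → EAcc Δ10 e := by
  intro e
  induction e with
  | zero => intro k hk; simp [cnt] at hk
  | one => intro k hk; simp [cnt] at hk
  | act a r _ => intro k hk; simp [cnt] at hk
  | add p q _ _ => intro k hk; simp [cnt] at hk
  | seq r s _ ihs =>
      intro k hk
      obtain ⟨m, n, hm, hn, -⟩ := cnt_seq hk
      exact .seq (accY r m hm) (ihs n hn)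
  | var v =>
      cases v with
      | X => intro _ _; exact .var (.addL .one)
      | Y => intro k hk; simp [cnt] at hk

section
variable {T : Expr Lab Id2 → Lab → Expr Lab Id2 → Prop} (hT : IsSeqStep Δ10 T)

include hT

lemma varY_tr : ∀ l q, T (.var .Y) l q ↔
    (l = .b ∧ q = .one) ∨ (l = .a ∧ q = .seq (.var .Y) (.var .Y)) := by
  have h := hT
  unfold IsSeqStep at h
  intro l q
  simp only [h, Δ10]
  tauto

lemma varX_tr : ∀ l q, T (.var .X) l q ↔
    (l = .a ∧ q = .seq (.var .Y) (.var .X)) := by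
  have h := hT
  unfold IsSeqStep at h
  intro l q
  simp only [h, Δ10]
  tauto

lemma stuckY : ∀ p : Expr Lab Id2, cntY p = some 0 → ∀ l q, ¬ T p l q := by
  intro p
  induction p with
  | zero => intro hk l q h; exact (hT _ _ _).mp h
  | one => intro hk l q h; exact (hT _ _ _).mp h
  | act a r _ => intro hk; simp [cntY] at hk
  | add p q _ _ => intro hk; simp [cntY] at hk
  | seq r s ihr ihs =>
      intro hk l q h
      obtain ⟨m, n, hm, hn, hmn⟩ := cntY_seq hk
      obtain ⟨rfl, rfl⟩ : m = 0 ∧ n = 0 := by omega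
      rcases (hT _ _ _).mp h with ⟨r', hr', -⟩ | ⟨-, -, hs'⟩
      · exact ihr hm _ _ hr'
      · exact ihs hn _ _ hs'
  | var v =>
      cases v with
      | X => intro hk; simp [cntY] at hk
      | Y => intro hk; simp [cntY] at hk

lemma bwdY : ∀ p : Expr Lab Id2, ∀ k, cntY p = some (k + 1) →
    (∃ q, T p .a q ∧ cntY q = some (k + 2)) ∧
    (∃ q, T p .b q ∧ cntY q = some k) := by
  intro p
  induction p with
  | zero => intro k hk; simp [cntY] at hk
  | one => intro k hk; simp [cntY] at hk
  | act a r _ => intro k hk; simp [cntY] at hk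
  | add p q _ _ => intro k hk; simp [cntY] at hk
  | var v =>
      cases v with
      | X => intro k hk; simp [cntY] at hk
      | Y =>
        intro k hk
        have hk0 : k = 0 := by simp [cntY] at hk; omega
        subst hk0
        constructor
        · exact ⟨.seq (.var .Y) (.var .Y), (varY_tr hT _ _).mpr (Or.inr ⟨rfl, rfl⟩),
            by simp [cntY]⟩
        · exact ⟨.one, (varY_tr hT _ _).mpr (Or.inl ⟨rfl, rfl⟩), by simp [cntY]⟩
  | seq r s ihr ihs =>
      intro k hk
      obtain ⟨m, n, hm, hn, hmn⟩ := cntY_seq hk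
      rcases m with _ | m'
      · -- r has no Ys: it is stuck and accepting; step inside s
        have hnk : n = k + 1 := by omega
        subst hnk
        obtain ⟨⟨qa, hqa, hca⟩, ⟨qb, hqb, hcb⟩⟩ := ihs k hn
        refine ⟨⟨qa, (hT _ _ _).mpr (Or.inr ⟨accY r 0 hm, stuckY hT r hm, hqa⟩), hca⟩,
          ⟨qb, (hT _ _ _).mpr (Or.inr ⟨accY r 0 hm, stuckY hT r hm, hqb⟩), hcb⟩⟩
      · -- step in r
        obtain ⟨⟨qa, hqa, hca⟩, ⟨qb, hqb, hcb⟩⟩ := ihr m' hm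
        refine ⟨⟨.seq qa s, (hT _ _ _).mpr (Or.inl ⟨qa, hqa, rfl⟩), ?_⟩,
          ⟨.seq qb s, (hT _ _ _).mpr (Or.inl ⟨qb, hqb, rfl⟩), ?_⟩⟩
        · simp [cntY, hca, hn]; omega
        · simp [cntY, hcb, hn]; omega

lemma fwdY : ∀ p : Expr Lab Id2, ∀ k, cntY p = some k → ∀ l q, T p l q →
    ∃ k', cntY q = some k' ∧
      ((l = .a ∧ k' = k + 1) ∨ (l = .b ∧ k = k' + 1)) := by
  intro p
  induction p with
  | zero => intro k hk; simp [cntY] at hk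
  | one => intro k hk l q h; exact absurd ((hT _ _ _).mp h) (by exact id)
  | act a r _ => intro k hk; simp [cntY] at hk
  | add p q _ _ => intro k hk; simp [cntY] at hk
  | var v =>
      cases v with
      | X => intro k hk; simp [cntY] at hk
      | Y =>
        intro k hk l q h
        have hk1 : k = 1 := by simp [cntY] at hk; omega
        subst hk1
        rcases (varY_tr hT _ _).mp h with ⟨rfl, rfl⟩ | ⟨rfl, rfl⟩
        · exact ⟨0, by simp [cntY], Or.inr ⟨rfl, rfl⟩⟩
        · exact ⟨2, by simp [cntY], Or.inl ⟨rfl, rfl⟩⟩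
  | seq r s ihr ihs =>
      intro k hk l q h
      obtain ⟨m, n, hm, hn, hmn⟩ := cntY_seq hk
      rcases (hT _ _ _).mp h with ⟨r', hr', rfl⟩ | ⟨-, hstuck, hs'⟩
      · obtain ⟨k', hk', hcase⟩ := ihr m hm _ _ hr'
        refine ⟨k' + n, by simp [cntY, hk', hn], ?_⟩
        rcases hcase with ⟨rfl, h2⟩ | ⟨rfl, h2⟩
        · exact Or.inl ⟨rfl, by omega⟩
        · exact Or.inr ⟨rfl, by omega⟩
      · have hm0 : m = 0 := by
          rcases m with _ | m'
          · rfl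
          · obtain ⟨⟨qa, hqa, -⟩, -⟩ := bwdY hT r m' hm
            exact absurd hqa (hstuck _ _)
        subst hm0
        obtain ⟨k', hk', hcase⟩ := ihs n hn _ _ hs'
        rcases hcase with ⟨rfl, h2⟩ | ⟨rfl, h2⟩
        · exact ⟨k', hk', Or.inl ⟨rfl, by omega⟩⟩
        · exact ⟨k', hk', Or.inr ⟨rfl, by omega⟩⟩

lemma bwdA : ∀ e : Expr Lab Id2, ∀ n, cnt e = some n →
    ∃ q, T e .a q ∧ cnt q = some (n + 1) := by
  intro e
  induction e with
  | zero => intro k hk; simp [cnt] at hk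
  | one => intro k hk; simp [cnt] at hk
  | act a r _ => intro k hk; simp [cnt] at hk
  | add p q _ _ => intro k hk; simp [cnt] at hk
  | var v =>
      cases v with
      | Y => intro k hk; simp [cnt] at hk
      | X =>
        intro k hk
        have hk0 : k = 0 := by simp [cnt] at hk; omega
        subst hk0
        exact ⟨.seq (.var .Y) (.var .X), (varX_tr hT _ _).mpr ⟨rfl, rfl⟩,
          by simp [cnt, cntY]⟩
  | seq r s _ ihs =>
      intro k hk
      obtain ⟨m, n, hm, hn, hmn⟩ := cnt_seq hk
      rcases m with _ | m'
      · obtain ⟨qa, hqa, hca⟩ := ihs n hn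
        exact ⟨qa, (hT _ _ _).mpr (Or.inr ⟨accY r 0 hm, stuckY hT r hm, hqa⟩),
          by rw [hca]; congr 1; omega⟩
      · obtain ⟨⟨qa, hqa, hca⟩, -⟩ := bwdY hT r m' hm
        refine ⟨.seq qa s, (hT _ _ _).mpr (Or.inl ⟨qa, hqa, rfl⟩), ?_⟩
        simp [cnt, hca, hn]; omega

lemma bwdB : ∀ e : Expr Lab Id2, ∀ n, cnt e = some (n + 1) →
    ∃ q, T e .b q ∧ cnt q = some n := by
  intro e
  induction e with
  | zero => intro k hk; simp [cnt] at hk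
  | one => intro k hk; simp [cnt] at hk
  | act a r _ => intro k hk; simp [cnt] at hk
  | add p q _ _ => intro k hk; simp [cnt] at hk
  | var v =>
      cases v with
      | Y => intro k hk; simp [cnt] at hk
      | X => intro k hk; simp [cnt] at hk
  | seq r s _ ihs =>
      intro k hk
      obtain ⟨m, n, hm, hn, hmn⟩ := cnt_seq hk
      rcases m with _ | m'
      · have hn' : n = k + 1 := by omega
        subst hn'
        obtain ⟨qb, hqb, hcb⟩ := ihs k hn
        exact ⟨qb, (hT _ _ _).mpr (Or.inr ⟨accY r 0 hm, stuckY hT r hm, hqb⟩), hcb⟩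
      · obtain ⟨-, ⟨qb, hqb, hcb⟩⟩ := bwdY hT r m' hm
        refine ⟨.seq qb s, (hT _ _ _).mpr (Or.inl ⟨qb, hqb, rfl⟩), ?_⟩
        simp [cnt, hcb, hn]; omega

lemma fwdE : ∀ e : Expr Lab Id2, ∀ n, cnt e = some n → ∀ l q, T e l q →
    ∃ n', cnt q = some n' ∧
      ((l = .a ∧ n' = n + 1) ∨ (l = .b ∧ n = n' + 1)) := by
  intro e
  induction e with
  | zero => intro k hk; simp [cnt] at hk
  | one => intro k hk; simp [cnt] at hk
  | act a r _ => intro k hk; simp [cnt] at hk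
  | add p q _ _ => intro k hk; simp [cnt] at hk
  | var v =>
      cases v with
      | Y => intro k hk; simp [cnt] at hk
      | X =>
        intro k hk l q h
        have hk0 : k = 0 := by simp [cnt] at hk; omega
        subst hk0
        obtain ⟨rfl, rfl⟩ := (varX_tr hT _ _).mp h
        exact ⟨1, by simp [cnt, cntY], Or.inl ⟨rfl, rfl⟩⟩
  | seq r s _ ihs =>
      intro k hk l q h
      obtain ⟨m, n, hm, hn, hmn⟩ := cnt_seq hk
      rcases (hT _ _ _).mp h with ⟨r', hr', rfl⟩ | ⟨-, hstuck, hs'⟩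
      · obtain ⟨k', hk', hcase⟩ := fwdY hT r m hm _ _ hr'
        refine ⟨k' + n, by simp [cnt, hk', hn], ?_⟩
        rcases hcase with ⟨rfl, h2⟩ | ⟨rfl, h2⟩
        · exact Or.inl ⟨rfl, by omega⟩
        · exact Or.inr ⟨rfl, by omega⟩
      · have hm0 : m = 0 := by
          rcases m with _ | m'
          · rfl
          · obtain ⟨⟨qa, hqa, -⟩, -⟩ := bwdY hT r m' hm
            exact absurd hqa (hstuck _ _)
        subst hm0
        obtain ⟨k', hk', hcase⟩ := ihs n hn _ _ hs'
        rcases hcase with ⟨rfl, h2⟩ | ⟨rfl, h2⟩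
        · exact ⟨k', hk', Or.inl ⟨rfl, by omega⟩⟩
        · exact ⟨k', hk', Or.inr ⟨rfl, by omega⟩⟩

/-- Same-count expressions are bisimilar. -/
lemma rel_bisim : IsBisimulation (⟨T, EAcc Δ10⟩ : LTS (Expr Lab Id2) Lab)
    (fun e f => ∃ n, cnt e = some n ∧ cnt f = some n) := by
  constructor
  · intro e f ⟨n, h1, h2⟩; exact ⟨n, h2, h1⟩
  · rintro s t ⟨n, hs, ht⟩
    refine ⟨?_, fun _ => accE t n ht⟩
    intro l s' h
    obtain ⟨n', hn', hcase⟩ := fwdE hT s n hs l s' h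
    rcases hcase with ⟨rfl, rfl⟩ | ⟨rfl, hsum⟩
    · obtain ⟨t', ht', hc⟩ := bwdA hT t n ht
      exact ⟨t', ht', n + 1, hn', hc⟩
    · obtain ⟨t', ht', hc⟩ := bwdB hT t n' (by rw [ht, hsum])
      exact ⟨t', ht', n', hn', hc⟩

lemma same_cnt_bisimilar {e f : Expr Lab Id2} {n : ℕ}
    (he : cnt e = some n) (hf : cnt f = some n) :
    Bisimilar (⟨T, EAcc Δ10⟩ : LTS (Expr Lab Id2) Lab) e f :=
  ⟨_, rel_bisim hT, n, he, hf⟩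

end

lemma cnt_ynx : ∀ n, cnt (ynx n) = some n := by
  intro n
  induction n with
  | zero => rfl
  | succ n ih => simp [ynx, cnt, cntY, ih]; omega

/-- the process graph of `X` is bisimilar to the always-accepting
counter: all states `Y^n⨟X` are accepting, `Y^n⨟X` (n ≥ 1) has exactly an
`a`-transition to (a state bisimilar to) `Y^{n+1}⨟X` and a `b`-transition to
(a state bisimilar to) `Y^{n-1}⨟X`, `X` steps by `a` to `Y⨟X`, and `X` is
bisimilar to the counter rooted at 0. -/
theorem seq_counter_spec
    (T : Expr Lab Id2 → Lab → Expr Lab Id2 → Prop) (hT : IsSeqStep Δ10 T) :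
    (∀ n, EAcc Δ10 (ynx n)) ∧
    (∀ n, 1 ≤ n →
      (∃ q, T (ynx n) .a q ∧ Bisimilar ⟨T, EAcc Δ10⟩ q (ynx (n + 1))) ∧
      (∃ q, T (ynx n) .b q ∧ Bisimilar ⟨T, EAcc Δ10⟩ q (ynx (n - 1))) ∧
      (∀ l q, T (ynx n) l q →
        (l = .a ∧ Bisimilar ⟨T, EAcc Δ10⟩ q (ynx (n + 1))) ∨
        (l = .b ∧ Bisimilar ⟨T, EAcc Δ10⟩ q (ynx (n - 1))))) ∧
    (∃ q, T (.var .X) .a q ∧ Bisimilar ⟨T, EAcc Δ10⟩ q (ynx 1)) ∧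
    Bisimilar2 ⟨T, EAcc Δ10⟩ counter (.var .X) 0 := by
  refine ⟨fun n => accE _ n (cnt_ynx n), ?_, ?_, ?_⟩
  · intro n hn
    obtain ⟨qa, hqa, hca⟩ := bwdA hT (ynx n) n (cnt_ynx n)
    obtain ⟨qb, hqb, hcb⟩ := bwdB hT (ynx n) (n - 1)
      (by rw [cnt_ynx]; congr 1; omega)
    refine ⟨⟨qa, hqa, same_cnt_bisimilar hT hca (cnt_ynx (n + 1))⟩,
      ⟨qb, hqb, same_cnt_bisimilar hT hcb (cnt_ynx (n - 1))⟩, ?_⟩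
    intro l q h
    obtain ⟨n', hn', hcase⟩ := fwdE hT (ynx n) n (cnt_ynx n) l q h
    rcases hcase with ⟨rfl, rfl⟩ | ⟨rfl, hsum⟩
    · exact Or.inl ⟨rfl, same_cnt_bisimilar hT hn' (cnt_ynx (n + 1))⟩
    · refine Or.inr ⟨rfl, same_cnt_bisimilar hT hn' ?_⟩
      rw [cnt_ynx]; congr 1; omega
  · obtain ⟨q, hq, hc⟩ := bwdA hT (.var .X) 0 rfl
    exact ⟨q, hq, same_cnt_bisimilar hT hc (cnt_ynx 1)⟩
  · refine ⟨fun e n => cnt e = some n, ?_, rfl⟩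
    rintro e n he
    refine ⟨?_, ?_, ⟨fun _ => trivial, fun _ => accE e n he⟩⟩
    · intro l q h
      obtain ⟨m, hm, hcase⟩ := fwdE hT e n he l q h
      rcases hcase with ⟨rfl, rfl⟩ | ⟨rfl, hsum⟩
      · exact ⟨n + 1, Or.inl ⟨rfl, rfl⟩, hm⟩
      · exact ⟨m, Or.inr ⟨rfl, hsum⟩, hm⟩
    · rintro l n' (⟨rfl, rfl⟩ | ⟨rfl, rfl⟩)
      · obtain ⟨q, hq, hc⟩ := bwdA hT e n he
        exact ⟨q, hq, hc⟩
      · obtain ⟨q, hq, hc⟩ := bwdB hT e n' (by rw [he])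
        exact ⟨q, hq, hc⟩
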